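/- Let m : ℝ^d → (0,∞) be a smooth positive density, E, S : ℝ^d → ℝ smooth, and J : ℝ^d → Mat(d,ℝ) smooth with J(x) antisymmetric and J(x)∇S(x) = 0 for all x, satisfying the unimodularity condition div(m J∇g) = 0 for every smooth g. Then the operator L_a f := ⟨∇E, J∇f⟩ is antisymmetric on L²(ℝ^d; e^{S} m dx): for all smooth compactly supported f, h : ℝ^d → ℝ, ∫_{ℝ^d} h(x) ⟨∇E(x), J(x)∇f(x)⟩ e^{S(x)} m(x) dx = − ∫_{ℝ^d} f(x) ⟨∇E(x), J(x)∇h(x)⟩ e^{S(x)} m(x) dx. -/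

import Mathlib

open MeasureTheory Real Matrix

/-- Gradient of `f : ℝ^d → ℝ` w.r.t. the standard inner product. -/
noncomputable def grad {d : ℕ} (f : (Fin d → ℝ) → ℝ) (x : Fin d → ℝ) : Fin d → ℝ :=
  fun i => fderiv ℝ f x (Pi.single i 1)

/-- Partial derivative `∂_{x_k} g (x)`. -/
noncomputable def pd {d : ℕ} (k : Fin d) (g : (Fin d → ℝ) → ℝ) (x : Fin d → ℝ) : ℝ :=
  fderiv ℝ g x (Pi.single k 1)

/-- Divergence of a vector field on ℝ^d: `div X = Σ_k ∂_{x_k} X_k`. -/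
noncomputable def vdiv {d : ℕ} (X : (Fin d → ℝ) → (Fin d → ℝ)) (x : Fin d → ℝ) : ℝ :=
  ∑ k, fderiv ℝ (fun y => X y k) x (Pi.single k 1)


/-!
Write `Y := m J∇E` and `φ := f h e^S`. By unimodularity `div Y = 0`, so
`div (φ Y) = ⟨∇φ, Y⟩ = e^S m (f ⟨∇h, J∇E⟩ + h ⟨∇f, J∇E⟩ + f h ⟨∇S, J∇E⟩)`.
Antisymmetry of `J` turns `⟨∇g, J∇E⟩` into `-⟨∇E, J∇g⟩`, and the last term vanishes since
`J∇S = 0`. The vector field `φ Y` is smooth with compact support, so its divergence integrates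
to zero, which is the claimed identity.
-/

section IntegralFDeriv

variable {E F : Type*} [NormedAddCommGroup E] [NormedSpace ℝ E] [MeasurableSpace E]
  [BorelSpace E] {μ : Measure E} [NormedAddCommGroup F] [NormedSpace ℝ F] {u : E → F}

theorem ContDiff.integrable_fderiv_apply [IsFiniteMeasureOnCompacts μ] (hu : ContDiff ℝ 1 u)
    (huc : HasCompactSupport u) (v : E) : Integrable (fun x => fderiv ℝ u x v) μ :=
  ((hu.continuous_fderiv one_ne_zero).clm_apply continuous_const).integrable_of_hasCompactSupport
    (huc.fderiv_apply ℝ v)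

/-- Integration by parts against the constant function `1`. -/
theorem integral_fderiv_apply_eq_zero [FiniteDimensional ℝ E] [μ.IsAddHaarMeasure]
    (hu : ContDiff ℝ 1 u) (huc : HasCompactSupport u) (v : E) : ∫ x, fderiv ℝ u x v ∂μ = 0 := by
  have hparts := integral_smul_fderiv_eq_neg_fderiv_smul_of_integrable (μ := μ)
    (f := fun _ => (1 : ℝ)) (g := u) (v := v) (by simp)
    (by simpa using hu.integrable_fderiv_apply huc v)
    (by simpa using hu.continuous.integrable_of_hasCompactSupport huc)
    (fun x _ => differentiableAt_const _) (fun x _ => hu.differentiable one_ne_zero x)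
  simpa using hparts

end IntegralFDeriv

theorem ContDiff.dotProduct {E ι : Type*} [NormedAddCommGroup E] [NormedSpace ℝ E] [Fintype ι]
    {n : WithTop ℕ∞} {u v : E → ι → ℝ} (hu : ContDiff ℝ n u) (hv : ContDiff ℝ n v) :
    ContDiff ℝ n fun x => u x ⬝ᵥ v x :=
  ContDiff.sum fun i _ => (contDiff_pi.1 hu i).mul (contDiff_pi.1 hv i)

theorem ContDiff.matrix_mulVec {E ι : Type*} [NormedAddCommGroup E] [NormedSpace ℝ E]
    [Fintype ι] {n : WithTop ℕ∞} {J : E → Matrix ι ι ℝ} {v : E → ι → ℝ}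
    (hJ : ∀ i j, ContDiff ℝ n fun x => J x i j) (hv : ContDiff ℝ n v) :
    ContDiff ℝ n fun x => J x *ᵥ v x :=
  contDiff_pi.2 fun i => (contDiff_pi.2 (hJ i)).dotProduct hv

theorem Matrix.dotProduct_mulVec_eq_neg_of_transpose_eq_neg {R ι : Type*} [CommRing R]
    [Fintype ι] {A : Matrix ι ι R} (hA : Aᵀ = -A) (u w : ι → R) :
    u ⬝ᵥ A *ᵥ w = -(w ⬝ᵥ A *ᵥ u) := by
  rw [dotProduct_mulVec, ← mulVec_transpose, hA, neg_mulVec, neg_dotProduct, dotProduct_comm]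

section Calculus

variable {d : ℕ}

theorem ContDiff.grad {n k : WithTop ℕ∞} {f : (Fin d → ℝ) → ℝ} (hf : ContDiff ℝ n f)
    (hkn : k + 1 ≤ n) : ContDiff ℝ k (grad f) :=
  contDiff_pi.2 fun _ => (hf.fderiv_right hkn).clm_apply contDiff_const

theorem HasCompactSupport.grad {f : (Fin d → ℝ) → ℝ} (hf : HasCompactSupport f) :
    HasCompactSupport (grad f) :=
  (hf.fderiv ℝ).comp_left (g := fun (L : (Fin d → ℝ) →L[ℝ] ℝ) i => L (Pi.single i 1))
    (by ext; rfl)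

theorem grad_mul {f g : (Fin d → ℝ) → ℝ} {x : Fin d → ℝ} (hf : DifferentiableAt ℝ f x)
    (hg : DifferentiableAt ℝ g x) :
    grad (fun y => f y * g y) x = f x • grad g x + g x • grad f x := by
  ext i
  simp [grad, fderiv_fun_mul hf hg]

theorem grad_exp {f : (Fin d → ℝ) → ℝ} {x : Fin d → ℝ} (hf : DifferentiableAt ℝ f x) :
    grad (fun y => Real.exp (f y)) x = Real.exp (f x) • grad f x := by
  ext i
  simp [grad, fderiv_exp hf]

theorem vdiv_mul_left {φ : (Fin d → ℝ) → ℝ} {Y : (Fin d → ℝ) → Fin d → ℝ} {x : Fin d → ℝ}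
    (hφ : DifferentiableAt ℝ φ x) (hY : DifferentiableAt ℝ Y x) :
    vdiv (fun y k => φ y * Y y k) x = φ x * vdiv Y x + grad φ x ⬝ᵥ Y x := by
  simp only [vdiv, grad, dotProduct, Finset.mul_sum, ← Finset.sum_add_distrib]
  refine Finset.sum_congr rfl fun k _ => ?_
  rw [fderiv_fun_mul hφ (differentiableAt_pi.1 hY k)]
  simp only [_root_.add_apply, _root_.smul_apply, smul_eq_mul]
  ring

theorem integral_vdiv_eq_zero {μ : Measure (Fin d → ℝ)} [μ.IsAddHaarMeasure]
    {X : (Fin d → ℝ) → Fin d → ℝ} (hX : ContDiff ℝ 1 X) (hXc : HasCompactSupport X) :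
    ∫ x, vdiv X x ∂μ = 0 := by
  have hXk : ∀ k, ContDiff ℝ 1 fun y => X y k := contDiff_pi.1 hX
  have hXkc : ∀ k, HasCompactSupport fun y => X y k := fun k =>
    hXc.comp_left (g := fun v : Fin d → ℝ => v k) rfl
  unfold vdiv
  rw [integral_finsetSum _ fun k _ => (hXk k).integrable_fderiv_apply (hXkc k) _]
  exact Finset.sum_eq_zero fun k _ => integral_fderiv_apply_eq_zero (hXk k) (hXkc k) _

end Calculus

theorem vdiv_weighted_hamiltonian_field {d : ℕ} {m E S f h : (Fin d → ℝ) → ℝ}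
    {J : (Fin d → ℝ) → Matrix (Fin d) (Fin d) ℝ} {x : Fin d → ℝ}
    (hf : DifferentiableAt ℝ f x) (hh : DifferentiableAt ℝ h x) (hS : DifferentiableAt ℝ S x)
    (hY : DifferentiableAt ℝ (fun y k => m y * (J y *ᵥ grad E y) k) x)
    (hdiv : vdiv (fun y k => m y * (J y *ᵥ grad E y) k) x = 0)
    (hJanti : (J x)ᵀ = -J x) (hJS : J x *ᵥ grad S x = 0) :
    vdiv (fun y k => f y * h y * Real.exp (S y) * (m y * (J y *ᵥ grad E y) k)) x
      = -(h x * (grad E x ⬝ᵥ J x *ᵥ grad f x) * (Real.exp (S x) * m x)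
          + f x * (grad E x ⬝ᵥ J x *ᵥ grad h x) * (Real.exp (S x) * m x)) := by
  have hskew := dotProduct_mulVec_eq_neg_of_transpose_eq_neg hJanti
  have hY_x : (fun k => m x * (J x *ᵥ grad E x) k) = m x • (J x *ᵥ grad E x) := rfl
  rw [vdiv_mul_left (φ := fun y => f y * h y * Real.exp (S y)) ((hf.mul hh).mul hS.exp) hY,
    hdiv, grad_mul (f := fun y => f y * h y) (hf.mul hh) hS.exp, grad_mul hf hh, grad_exp hS,
    hY_x]
  simp only [dotProduct_smul, add_dotProduct, smul_dotProduct, smul_eq_mul,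
    hskew (grad f x), hskew (grad h x), hskew (grad S x), hJS, dotProduct_zero]
  ring

theorem hamiltonian_part_antisymmetric_general {d : ℕ}
    (m : (Fin d → ℝ) → ℝ) (E S : (Fin d → ℝ) → ℝ)
    (J : (Fin d → ℝ) → Matrix (Fin d) (Fin d) ℝ)
    (hm : ContDiff ℝ (⊤ : ℕ∞) m)
    (hE : ContDiff ℝ (⊤ : ℕ∞) E) (hS : ContDiff ℝ (⊤ : ℕ∞) S)
    (hJ : ∀ i j, ContDiff ℝ (⊤ : ℕ∞) fun x => J x i j)
    (hJanti : ∀ x, (J x)ᵀ = -J x)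
    (hJS : ∀ x, (J x).mulVec (grad S x) = 0)
    (huni : ∀ g : (Fin d → ℝ) → ℝ, ContDiff ℝ (⊤ : ℕ∞) g →
      ∀ x, vdiv (fun y k => m y * (J y).mulVec (grad g y) k) x = 0)
    (f h : (Fin d → ℝ) → ℝ)
    (hf : ContDiff ℝ (⊤ : ℕ∞) f) (hfc : HasCompactSupport f)
    (hh : ContDiff ℝ (⊤ : ℕ∞) h) :
    ∫ x, h x * (grad E x ⬝ᵥ (J x).mulVec (grad f x)) * (Real.exp (S x) * m x)
      = - ∫ x, f x * (grad E x ⬝ᵥ (J x).mulVec (grad h x)) * (Real.exp (S x) * m x) := by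
  have hgrad : ∀ {g : (Fin d → ℝ) → ℝ}, ContDiff ℝ (⊤ : ℕ∞) g →
      ContDiff ℝ (⊤ : ℕ∞) fun x => grad E x ⬝ᵥ J x *ᵥ grad g x := fun hg =>
    (hE.grad le_rfl).dotProduct (.matrix_mulVec hJ (hg.grad le_rfl))
  have hY : ContDiff ℝ (⊤ : ℕ∞) fun y k => m y * (J y *ᵥ grad E y) k :=
    hm.smul (.matrix_mulVec hJ (hE.grad le_rfl))
  have hweight : Continuous fun x => Real.exp (S x) * m x := (hS.exp.mul hm).continuous
  have hflux := integral_vdiv_eq_zero (μ := volume)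
    (X := fun y k => f y * h y * Real.exp (S y) * (m y * (J y *ᵥ grad E y) k))
    ((((hf.mul hh).mul hS.exp).smul hY).of_le (by simp))
    ((hfc.mul_right.mul_right).smul_right)
  have hI₁ : Integrable fun x =>
      h x * (grad E x ⬝ᵥ J x *ᵥ grad f x) * (Real.exp (S x) * m x) := by
    refine ((hh.continuous.mul (hgrad hf).continuous).mul hweight
      ).integrable_of_hasCompactSupport (hfc.grad.mono ?_)
    exact Function.support_subset_iff'.2 fun x hx => by simp [Function.notMem_support.1 hx]
  have hI₂ : Integrable fun x =>
      f x * (grad E x ⬝ᵥ J x *ᵥ grad h x) * (Real.exp (S x) * m x) :=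
    ((hf.continuous.mul (hgrad hh).continuous).mul hweight).integrable_of_hasCompactSupport
      (hfc.mul_right.mul_right)
  have hpointwise := fun x => vdiv_weighted_hamiltonian_field (hf.differentiable (by simp) x)
    (hh.differentiable (by simp) x) (hS.differentiable (by simp) x)
    (hY.differentiable (by simp) x) (huni E hE x) (hJanti x) (hJS x)
  rw [funext hpointwise, integral_neg, integral_add hI₁ hI₂, neg_eq_zero] at hflux
  linarith

/-- the Hamiltonian part `L_a f = ⟨∇E, J∇f⟩` of the GENERIC generator
is antisymmetric on `L²(ℝ^d; e^S m dx)`. -/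
theorem hamiltonian_part_antisymmetric {d : ℕ}
    (m : (Fin d → ℝ) → ℝ) (E S : (Fin d → ℝ) → ℝ)
    (J : (Fin d → ℝ) → Matrix (Fin d) (Fin d) ℝ)
    (hm : ContDiff ℝ (⊤ : ℕ∞) m) (hmpos : ∀ x, 0 < m x)
    (hE : ContDiff ℝ (⊤ : ℕ∞) E) (hS : ContDiff ℝ (⊤ : ℕ∞) S)
    (hJ : ∀ i j, ContDiff ℝ (⊤ : ℕ∞) fun x => J x i j)
    (hJanti : ∀ x, (J x)ᵀ = -J x)
    (hJS : ∀ x, (J x).mulVec (grad S x) = 0)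
    (huni : ∀ g : (Fin d → ℝ) → ℝ, ContDiff ℝ (⊤ : ℕ∞) g →
      ∀ x, vdiv (fun y k => m y * (J y).mulVec (grad g y) k) x = 0)
    (f h : (Fin d → ℝ) → ℝ)
    (hf : ContDiff ℝ (⊤ : ℕ∞) f) (hfc : HasCompactSupport f)
    (hh : ContDiff ℝ (⊤ : ℕ∞) h) (hhc : HasCompactSupport h) :
    ∫ x, h x * (grad E x ⬝ᵥ (J x).mulVec (grad f x)) * (Real.exp (S x) * m x)
      = - ∫ x, f x * (grad E x ⬝ᵥ (J x).mulVec (grad h x)) * (Real.exp (S x) * m x) :=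
  hamiltonian_part_antisymmetric_general m E S J hm hE hS hJ hJanti hJS huni f h hf hfc hh
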